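/- arXiv:2508.21086 — 3 statements merged into one kernel-verified Lean document; each statement's English description precedes it below -/
import Mathlib

section
/- Let k₁ and k₂ be kernels on a measurable space X such that for every nonzero finite complex measure m, ∬ kᵢ(x,y) d conj(m)(x) dm(y) > 0 (integrally strictly positive definite), with both kernels bounded and measurable. Then the pointwise product k₁·k₂ is also integrally strictly positive definite, provided each kᵢ arises as kᵢ(x,y) = ⟨φᵢ(x), φᵢ(y)⟩ for a bounded measurable feature map φᵢ into a separable Hilbert space. -/
/-!
Write `kᵢ(x, y) = ⟪Ψᵢ x, Ψᵢ y⟫` with `Ψᵢ` bounded, strongly measurable and valued in a Hilbert space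
(completing `Hᵢ` if necessary). For such a kernel `∬ conj (f x) f y k(x, y) dμ dμ = ‖∫ f • Ψ dμ‖²`,
so integral strict positive definiteness says exactly that `f μ ↦ ∫ f • Ψ dμ` is injective.
The product kernel is the feature kernel of `ψ x = Ψ₂ x ⊗ Ψ₁ x ∈ ℓ²(ι, H₁)`, where `ι` indexes a
Hilbert basis `b` of `H₂`. If `∫ f • ψ dμ = 0`, its `i`-th coordinate `∫ (f ⟪b i, Ψ₂⟫) • Ψ₁ dμ`
vanishes, so `f ⟪b i, Ψ₂⟫ = 0` a.e. by injectivity for `k₁`; hence every coordinate of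
`∫ f • Ψ₂ dμ` vanishes, and `f = 0` a.e. by injectivity for `k₂`.
-/

open MeasureTheory
open scoped InnerProductSpace ComplexConjugate

/-- A kernel `k` is integrally strictly positive definite if for every nonzero finite
complex measure `m` (represented here as a density `f` with respect to a finite
positive measure `μ`), the double integral `∬ conj(f x) f y k(x,y) dμ dμ` is a
strictly positive real number. -/
def IsIntSPD {X : Type*} [MeasurableSpace X] (k : X → X → ℂ) : Prop :=
  ∀ (μ : Measure X), IsFiniteMeasure μ → ∀ f : X → ℂ,
    Integrable f μ → ¬ (f =ᵐ[μ] 0) →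
      ∃ r : ℝ, 0 < r ∧
        (∫ x, ∫ y, (starRingEnd ℂ) (f x) * f y * k x y ∂μ ∂μ) = (r : ℂ)

namespace lp

variable {ι E : Type*} [NormedAddCommGroup E] [InnerProductSpace ℂ E]

theorem memℓp_smul_const (a : lp (fun _ : ι => ℂ) 2) (e : E) :
    Memℓp (fun i => a i • e) 2 := by
  refine memℓp_gen ?_
  refine (((lp.memℓp a).summable (by norm_num)).mul_right (‖e‖ ^ (2 : ENNReal).toReal)).congr
    fun i => ?_
  rw [norm_smul, Real.mul_rpow (norm_nonneg _) (norm_nonneg _)]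

/-- The elementary tensor `a ⊗ e` under `ℓ²(ι) ⊗ E ≃ ℓ²(ι, E)`. -/
def smulRight (a : lp (fun _ : ι => ℂ) 2) (e : E) : lp (fun _ : ι => E) 2 :=
  ⟨fun i => a i • e, memℓp_smul_const a e⟩

@[simp]
theorem smulRight_apply (a : lp (fun _ : ι => ℂ) 2) (e : E) (i : ι) :
    smulRight a e i = a i • e := rfl

theorem inner_smulRight (a a' : lp (fun _ : ι => ℂ) 2) (e e' : E) :
    ⟪smulRight a e, smulRight a' e'⟫_ℂ = ⟪a, a'⟫_ℂ * ⟪e, e'⟫_ℂ := by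
  rw [lp.inner_eq_tsum, lp.inner_eq_tsum, ← tsum_mul_right]
  refine tsum_congr fun i => ?_
  simp only [smulRight_apply, inner_smul_left, inner_smul_right, RCLike.inner_apply']
  ring

theorem norm_smulRight (a : lp (fun _ : ι => ℂ) 2) (e : E) :
    ‖smulRight a e‖ = ‖a‖ * ‖e‖ := by
  have h := inner_smulRight a a e e
  simp only [inner_self_eq_norm_sq_to_K] at h
  exact (pow_left_inj₀ (norm_nonneg _) (by positivity) two_ne_zero).1
    (by rw [mul_pow]; exact_mod_cast h)

variable (ι E) in
noncomputable def smulRightL : lp (fun _ : ι => ℂ) 2 →L[ℂ] E →L[ℂ] lp (fun _ : ι => E) 2 :=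
  LinearMap.mkContinuous₂
    (LinearMap.mk₂ ℂ smulRight
      (fun a a' e => lp.ext <| funext fun i => add_smul (a i) (a' i) e)
      (fun c a e => lp.ext <| funext fun i => mul_smul c (a i) e)
      (fun a e e' => lp.ext <| funext fun i => smul_add (a i) e e')
      (fun c a e => lp.ext <| funext fun i => smul_comm (a i) c e))
    1 fun a e => by simp [norm_smulRight]

theorem continuous_smulRight :
    Continuous fun p : lp (fun _ : ι => ℂ) 2 × E => smulRight p.1 p.2 :=
  (smulRightL ι E).continuous₂

end lp

section FeatureKernel

variable {X : Type*} [MeasurableSpace X]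
  {E : Type*} [NormedAddCommGroup E] [InnerProductSpace ℂ E] [CompleteSpace E]

theorem integral_integral_conj_mul_mul_inner {μ : Measure X} {Ψ : X → E} {f : X → ℂ}
    (hfΨ : Integrable (fun x => f x • Ψ x) μ) :
    ∫ x, ∫ y, conj (f x) * f y * ⟪Ψ x, Ψ y⟫_ℂ ∂μ ∂μ
      = ((‖∫ x, f x • Ψ x ∂μ‖ ^ 2 : ℝ) : ℂ) := by
  set v := ∫ x, f x • Ψ x ∂μ
  have h_inner : ∀ x y, conj (f x) * f y * ⟪Ψ x, Ψ y⟫_ℂ = ⟪f x • Ψ x, f y • Ψ y⟫_ℂ := by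
    intro x y
    rw [inner_smul_left, inner_smul_right]
    ring
  calc ∫ x, ∫ y, conj (f x) * f y * ⟪Ψ x, Ψ y⟫_ℂ ∂μ ∂μ
      = ∫ x, conj ⟪v, f x • Ψ x⟫_ℂ ∂μ := by
        simp only [h_inner, integral_inner hfΨ, inner_conj_symm]
        rfl
    _ = ⟪v, v⟫_ℂ := by rw [integral_conj, integral_inner hfΨ, inner_conj_symm]
    _ = ((‖v‖ ^ 2 : ℝ) : ℂ) := by rw [inner_self_eq_norm_sq_to_K]; push_cast; rfl

theorem isIntSPD_inner_iff {Ψ : X → E} (hΨ : StronglyMeasurable Ψ)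
    (hΨ_bdd : ∃ C, ∀ x, ‖Ψ x‖ ≤ C) :
    IsIntSPD (fun x y => ⟪Ψ x, Ψ y⟫_ℂ) ↔ ∀ (μ : Measure X), IsFiniteMeasure μ →
      ∀ f : X → ℂ, Integrable f μ → ∫ x, f x • Ψ x ∂μ = 0 → f =ᵐ[μ] 0 := by
  obtain ⟨C, hC⟩ := hΨ_bdd
  have hfΨ : ∀ {μ : Measure X} {f : X → ℂ}, Integrable f μ → Integrable (fun x => f x • Ψ x) μ :=
    fun hf => hf.smul_bdd C hΨ.aestronglyMeasurable (ae_of_all _ hC)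
  constructor
  · intro h μ hμ f hf hf0
    by_contra hne
    obtain ⟨r, hr, hr_eq⟩ := h μ hμ f hf hne
    rw [integral_integral_conj_mul_mul_inner (hfΨ hf), hf0, norm_zero, zero_pow two_ne_zero,
      Complex.ofReal_zero] at hr_eq
    exact hr.ne' (Complex.ofReal_eq_zero.1 hr_eq.symm)
  · intro h μ hμ f hf hne
    refine ⟨‖∫ x, f x • Ψ x ∂μ‖ ^ 2, ?_, integral_integral_conj_mul_mul_inner (hfΨ hf)⟩
    exact pow_pos (norm_pos_iff.2 fun h0 => hne (h μ hμ f hf h0)) 2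

theorem isIntSPD_inner_mul_inner {F : Type*} [NormedAddCommGroup F] [InnerProductSpace ℂ F]
    [CompleteSpace F] {Ψ₁ : X → E} {Ψ₂ : X → F}
    (hΨ₁ : StronglyMeasurable Ψ₁) (hΨ₂ : StronglyMeasurable Ψ₂)
    (hb₁ : ∃ C, ∀ x, ‖Ψ₁ x‖ ≤ C) (hb₂ : ∃ C, ∀ x, ‖Ψ₂ x‖ ≤ C)
    (h₁ : IsIntSPD fun x y => ⟪Ψ₁ x, Ψ₁ y⟫_ℂ) (h₂ : IsIntSPD fun x y => ⟪Ψ₂ x, Ψ₂ y⟫_ℂ) :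
    IsIntSPD fun x y => ⟪Ψ₁ x, Ψ₁ y⟫_ℂ * ⟪Ψ₂ x, Ψ₂ y⟫_ℂ := by
  obtain ⟨ι, b, -⟩ := exists_hilbertBasis ℂ F
  obtain ⟨C₁, hC₁⟩ := hb₁
  obtain ⟨C₂, hC₂⟩ := hb₂
  let ψ : X → lp (fun _ : ι => E) 2 := fun x => lp.smulRight (b.repr (Ψ₂ x)) (Ψ₁ x)
  have hψ_inner : ∀ x y, ⟪ψ x, ψ y⟫_ℂ = ⟪Ψ₁ x, Ψ₁ y⟫_ℂ * ⟪Ψ₂ x, Ψ₂ y⟫_ℂ := fun x y => by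
    rw [lp.inner_smulRight, LinearIsometryEquiv.inner_map_map, mul_comm]
  have hψ : StronglyMeasurable ψ := lp.continuous_smulRight.comp_stronglyMeasurable
    ((b.repr.continuous.comp_stronglyMeasurable hΨ₂).prodMk hΨ₁)
  have hψ_bdd : ∀ x, ‖ψ x‖ ≤ C₂ * C₁ := fun x => by
    rw [lp.norm_smulRight, LinearIsometryEquiv.norm_map]
    exact mul_le_mul (hC₂ x) (hC₁ x) (norm_nonneg _) ((norm_nonneg _).trans (hC₂ x))
  simp only [← hψ_inner]
  refine (isIntSPD_inner_iff hψ ⟨_, hψ_bdd⟩).2 fun μ hμ f hf hf0 => ?_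
  have h_coord : ∀ i, (fun x => f x * ⟪b i, Ψ₂ x⟫_ℂ) =ᵐ[μ] 0 := by
    intro i
    have hc_bdd : ∀ x, ‖⟪b i, Ψ₂ x⟫_ℂ‖ ≤ C₂ := fun x =>
      (norm_inner_le_norm _ _).trans (by rw [b.orthonormal.1 i, one_mul]; exact hC₂ x)
    have hfc : Integrable (fun x => f x * ⟪b i, Ψ₂ x⟫_ℂ) μ :=
      hf.mul_bdd (aestronglyMeasurable_const.inner hΨ₂.aestronglyMeasurable) (ae_of_all _ hc_bdd)
    have hfψ : Integrable (fun x => f x • ψ x) μ :=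
      hf.smul_bdd _ hψ.aestronglyMeasurable (ae_of_all _ hψ_bdd)
    refine (isIntSPD_inner_iff hΨ₁ ⟨C₁, hC₁⟩).1 h₁ μ hμ _ hfc ?_
    calc ∫ x, (f x * ⟪b i, Ψ₂ x⟫_ℂ) • Ψ₁ x ∂μ
        = lp.evalCLM ℂ (fun _ : ι => E) 2 i (∫ x, f x • ψ x ∂μ) := by
          rw [← ContinuousLinearMap.integral_comp_comm _ hfψ]
          refine integral_congr_ae (ae_of_all _ fun x => ?_)
          simp [ψ, lp.evalCLM, b.repr_apply_apply, smul_smul]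
      _ = 0 := by rw [show (∫ x, f x • ψ x ∂μ) = 0 from hf0, map_zero]
  refine (isIntSPD_inner_iff hΨ₂ ⟨C₂, hC₂⟩).1 h₂ μ hμ f hf (b.repr.injective ?_)
  have hfΨ₂ : Integrable (fun x => f x • Ψ₂ x) μ :=
    hf.smul_bdd C₂ hΨ₂.aestronglyMeasurable (ae_of_all _ hC₂)
  ext i
  rw [b.repr_apply_apply, ← integral_inner hfΨ₂, map_zero, lp.coeFn_zero, Pi.zero_apply]
  simpa only [inner_smul_right] using integral_eq_zero_of_ae (h_coord i)

end FeatureKernel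

open UniformSpace in
/-- The pointwise product of two integrally strictly positive definite kernels, each
given by a bounded measurable feature map into a separable complex Hilbert space, is
integrally strictly positive definite. -/
theorem product_kernel_isIntSPD
    {X : Type*} [MeasurableSpace X]
    {H₁ : Type*} [NormedAddCommGroup H₁] [InnerProductSpace ℂ H₁]
    [TopologicalSpace.SeparableSpace H₁] [MeasurableSpace H₁] [BorelSpace H₁]
    {H₂ : Type*} [NormedAddCommGroup H₂] [InnerProductSpace ℂ H₂]
    [TopologicalSpace.SeparableSpace H₂] [MeasurableSpace H₂] [BorelSpace H₂]
    (φ₁ : X → H₁) (φ₂ : X → H₂)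
    (hφ₁ : Measurable φ₁) (hφ₂ : Measurable φ₂)
    (hb₁ : ∃ C, ∀ x, ‖φ₁ x‖ ≤ C) (hb₂ : ∃ C, ∀ x, ‖φ₂ x‖ ≤ C)
    (h₁ : IsIntSPD (fun x y => ⟪φ₁ x, φ₁ y⟫_ℂ))
    (h₂ : IsIntSPD (fun x y => ⟪φ₂ x, φ₂ y⟫_ℂ)) :
    IsIntSPD (fun x y => (⟪φ₁ x, φ₁ y⟫_ℂ) * (⟪φ₂ x, φ₂ y⟫_ℂ)) := by
  have : SecondCountableTopology H₁ := secondCountable_of_separable H₁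
  have : SecondCountableTopology H₂ := secondCountable_of_separable H₂
  have hΦ₁ : StronglyMeasurable fun x => (φ₁ x : Completion H₁) :=
    (Completion.continuous_coe H₁).comp_stronglyMeasurable hφ₁.stronglyMeasurable
  have hΦ₂ : StronglyMeasurable fun x => (φ₂ x : Completion H₂) :=
    (Completion.continuous_coe H₂).comp_stronglyMeasurable hφ₂.stronglyMeasurable
  simpa only [Completion.inner_coe] using isIntSPD_inner_mul_inner hΦ₁ hΦ₂
    (by simpa only [Completion.norm_coe] using hb₁) (by simpa only [Completion.norm_coe] using hb₂)
    (by simpa only [Completion.inner_coe] using h₁) (by simpa only [Completion.inner_coe] using h₂)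
end

section
/- If k(x,y) = ⟨φ(x), φ(y)⟩ is integrally strictly positive definite for a bounded measurable feature map φ into a separable Hilbert space, then the norm-squared kernel |k(x,y)|² is also integrally strictly positive definite. -/
open MeasureTheory
open scoped InnerProductSpace

/-!
Expanding `⟪φ y, φ x⟫ = ∑ᵢ ⟪φ y, bᵢ⟫ ⟪bᵢ, φ x⟫` in a countable Hilbert basis `b` of the completion
of `H` writes the quadratic form of `|k|²` at a density `f` as the sum over `i` of the quadratic
forms of `k` at the densities `f ⟪φ ·, bᵢ⟫` (dominated convergence on `μ × μ`, with a bound that is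
summable by Parseval). Each summand is nonnegative, and they cannot all vanish: if every
`f ⟪φ ·, bᵢ⟫` is zero a.e. then `f • φ = 0` a.e., which makes the quadratic form of `k` at `f` zero.
-/

open scoped ComplexOrder ComplexConjugate

theorem Orthonormal.countable {𝕜 E ι : Type*} [RCLike 𝕜] [NormedAddCommGroup E]
    [InnerProductSpace 𝕜 E] [TopologicalSpace.SeparableSpace E] {v : ι → E}
    (hv : Orthonormal 𝕜 v) : Countable ι := by
  refine Pairwise.countable_of_isOpen_disjoint (s := fun i => Metric.ball (v i) 2⁻¹)
    (fun i j hij => Metric.ball_disjoint_ball ?_) (fun _ => Metric.isOpen_ball)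
    (fun _ => Metric.nonempty_ball.2 (by norm_num))
  have hsq : ‖v i - v j‖ ^ 2 = 2 := by
    rw [@norm_sub_sq 𝕜, hv.2 hij, hv.1 i, hv.1 j]
    norm_num
  rw [dist_eq_norm]
  nlinarith [norm_nonneg (v i - v j)]

section HilbertBasis

variable {ι 𝕜 E : Type*} [RCLike 𝕜] [NormedAddCommGroup E] [InnerProductSpace 𝕜 E]

theorem HilbertBasis.hasSum_norm_inner_sq (b : HilbertBasis ι 𝕜 E) (v : E) :
    HasSum (fun i => ‖⟪b i, v⟫_𝕜‖ ^ 2) (‖v‖ ^ 2) := by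
  simpa [b.repr_apply_apply] using lp.hasSum_norm (p := 2) (by norm_num) (b.repr v)

theorem HilbertBasis.eq_zero_of_forall_inner_eq_zero (b : HilbertBasis ι 𝕜 E) {v : E}
    (h : ∀ i, ⟪v, b i⟫_𝕜 = 0) : v = 0 := by
  refine b.repr.map_eq_zero_iff.mp (lp.ext (funext fun i => ?_))
  simpa [b.repr_apply_apply, inner_eq_zero_symm] using h i

end HilbertBasis

section KernelQuadForm

variable {X : Type*} [MeasurableSpace X] {μ : Measure X} {k : X → X → ℂ} {f : X → ℂ}

noncomputable def kernelQuadForm (μ : Measure X) (k : X → X → ℂ) (f : X → ℂ) : ℂ :=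
  ∫ x, ∫ y, conj (f x) * f y * k x y ∂μ ∂μ

theorem isIntSPD_iff_pos : IsIntSPD k ↔ ∀ μ : Measure X, IsFiniteMeasure μ → ∀ f : X → ℂ,
    Integrable f μ → ¬ f =ᵐ[μ] 0 → 0 < kernelQuadForm μ k f := by
  refine forall₄_congr fun μ _ f _ => imp_congr_right fun _ => ?_
  rw [RCLike.pos_iff_exists_ofReal]
  exact exists_congr fun r => and_congr_right' eq_comm

theorem kernelQuadForm_eq_zero_of_ae_eq_zero (hf : f =ᵐ[μ] 0) : kernelQuadForm μ k f = 0 := by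
  rw [kernelQuadForm, integral_eq_zero_of_ae]
  filter_upwards [hf] with x hx
  simp [hx]

theorem IsIntSPD.kernelQuadForm_nonneg (h : IsIntSPD k) [IsFiniteMeasure μ]
    (hf : Integrable f μ) : 0 ≤ kernelQuadForm μ k f := by
  by_cases hf0 : f =ᵐ[μ] 0
  · exact (kernelQuadForm_eq_zero_of_ae_eq_zero hf0).ge
  · exact (isIntSPD_iff_pos.mp h μ inferInstance f hf hf0).le

theorem integrable_kernelQuadForm_integrand [SFinite μ] (hf : Integrable f μ)
    (hk : AEStronglyMeasurable (fun p : X × X => k p.1 p.2) (μ.prod μ)) {M : ℝ}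
    (hkM : ∀ x y, ‖k x y‖ ≤ M) :
    Integrable (fun p : X × X => conj (f p.1) * f p.2 * k p.1 p.2) (μ.prod μ) := by
  refine ((hf.norm.mul_prod hf.norm).mul_const M).mono'
    (((Complex.continuous_conj.comp_aestronglyMeasurable hf.1).comp_fst.mul hf.1.comp_snd).mul hk)
    (ae_of_all _ fun p => ?_)
  rw [norm_mul, norm_mul, RCLike.norm_conj]
  exact mul_le_mul_of_nonneg_left (hkM p.1 p.2) (by positivity)

theorem kernelQuadForm_eq_integral_prod [SFinite μ]
    (hint : Integrable (fun p : X × X => conj (f p.1) * f p.2 * k p.1 p.2) (μ.prod μ)) :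
    kernelQuadForm μ k f = ∫ p, conj (f p.1) * f p.2 * k p.1 p.2 ∂μ.prod μ :=
  (integral_prod _ hint).symm

end KernelQuadForm

theorem integrable_prod_norm_mul_norm_mul_sq_add_sq {X E : Type*} [MeasurableSpace X]
    {μ : Measure X} [SFinite μ] [SeminormedAddCommGroup E] {f : X → ℂ} {Φ : X → E}
    (hf : Integrable f μ) (hΦ : StronglyMeasurable Φ) {C : ℝ} (hC : ∀ x, ‖Φ x‖ ≤ C) (K : ℝ) :
    Integrable (fun p : X × X => ‖f p.1‖ * ‖f p.2‖ * K * (‖Φ p.1‖ ^ 2 + ‖Φ p.2‖ ^ 2))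
      (μ.prod μ) := by
  refine ((hf.norm.mul_prod hf.norm).mul_const (|K| * (C ^ 2 + C ^ 2))).mono' ?_
    (ae_of_all _ fun p => ?_)
  · exact ((hf.1.norm.comp_fst.mul hf.1.norm.comp_snd).mul_const _).mul
      ((hΦ.norm.comp_measurable measurable_fst).pow 2 |>.add
        ((hΦ.norm.comp_measurable measurable_snd).pow 2)).aestronglyMeasurable
  · simp only [norm_mul, Real.norm_eq_abs, abs_norm, abs_of_nonneg (by positivity :
      (0 : ℝ) ≤ ‖Φ p.1‖ ^ 2 + ‖Φ p.2‖ ^ 2)]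
    rw [mul_assoc (‖f p.1‖ * ‖f p.2‖)]
    gcongr <;> exact hC _

section InnerKernel

variable {X E ι : Type*} [MeasurableSpace X] {μ : Measure X} [NormedAddCommGroup E]
  [InnerProductSpace ℂ E] {Φ : X → E} {f : X → ℂ}

theorem MeasureTheory.Integrable.mul_inner_const (hf : Integrable f μ) (hΦ : StronglyMeasurable Φ)
    {C : ℝ} (hC : ∀ x, ‖Φ x‖ ≤ C) (e : E) : Integrable (fun x => f x * ⟪Φ x, e⟫_ℂ) μ :=
  hf.mul_bdd (hΦ.inner stronglyMeasurable_const).aestronglyMeasurable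
    (ae_of_all _ fun x => (norm_inner_le_norm (𝕜 := ℂ) _ _).trans
      (mul_le_mul_of_nonneg_right (hC x) (norm_nonneg e)))

theorem kernelQuadForm_inner_eq_zero_of_ae_smul_eq_zero (h : ∀ᵐ x ∂μ, f x • Φ x = 0) :
    kernelQuadForm μ (fun x y => ⟪Φ x, Φ y⟫_ℂ) f = 0 := by
  rw [kernelQuadForm, integral_eq_zero_of_ae]
  filter_upwards [h] with x hx
  have hxy : ∀ y, conj (f x) * f y * ⟪Φ x, Φ y⟫_ℂ = f y * ⟪f x • Φ x, Φ y⟫_ℂ := fun y => by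
    rw [inner_smul_left]
    ring
  simp [hxy, hx]

theorem HilbertBasis.ae_smul_eq_zero_of_coeff_ae_eq_zero [Countable ι] (b : HilbertBasis ι ℂ E)
    (h : ∀ i, (fun x => f x * ⟪Φ x, b i⟫_ℂ) =ᵐ[μ] 0) : ∀ᵐ x ∂μ, f x • Φ x = 0 := by
  filter_upwards [ae_all_iff.mpr h] with x hx
  by_cases hfx : f x = 0
  · simp [hfx]
  · exact smul_eq_zero_of_right _ (b.eq_zero_of_forall_inner_eq_zero fun i =>
      (mul_eq_zero.mp (hx i)).resolve_left hfx)

theorem HilbertBasis.hasSum_conj_mul_inner_mul_inner (b : HilbertBasis ι ℂ E) (u v : E)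
    (a c : ℂ) :
    HasSum (fun i => conj (a * ⟪u, b i⟫_ℂ) * (c * ⟪v, b i⟫_ℂ) * ⟪u, v⟫_ℂ)
      (conj a * c * (‖⟪u, v⟫_ℂ‖ : ℂ) ^ 2) := by
  have hsum := (b.hasSum_inner_mul_inner v u).mul_left (conj a * c * ⟪u, v⟫_ℂ)
  rw [← inner_conj_symm v u, mul_assoc (conj a * c), Complex.mul_conj'] at hsum
  have hterm : ∀ i, conj (a * ⟪u, b i⟫_ℂ) * (c * ⟪v, b i⟫_ℂ) * ⟪u, v⟫_ℂ =
      conj a * c * ⟪u, v⟫_ℂ * (⟪v, b i⟫_ℂ * ⟪b i, u⟫_ℂ) := fun i => by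
    rw [map_mul, inner_conj_symm]
    ring
  simpa only [hterm] using hsum

theorem norm_conj_mul_inner_mul_inner_le (a c : ℂ) (u v e : E) {M : ℝ}
    (hM : ‖⟪u, v⟫_ℂ‖ ≤ M) :
    ‖conj (a * ⟪u, e⟫_ℂ) * (c * ⟪v, e⟫_ℂ) * ⟪u, v⟫_ℂ‖ ≤
      ‖a‖ * ‖c‖ * M * (‖⟪e, u⟫_ℂ‖ ^ 2 + ‖⟪e, v⟫_ℂ‖ ^ 2) := by
  simp only [norm_mul, RCLike.norm_conj]
  rw [norm_inner_symm u e, norm_inner_symm v e]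
  have hamgm : ‖⟪e, u⟫_ℂ‖ * ‖⟪e, v⟫_ℂ‖ ≤ ‖⟪e, u⟫_ℂ‖ ^ 2 + ‖⟪e, v⟫_ℂ‖ ^ 2 := by
    nlinarith [sq_nonneg (‖⟪e, u⟫_ℂ‖ - ‖⟪e, v⟫_ℂ‖), norm_nonneg ⟪e, u⟫_ℂ,
      norm_nonneg ⟪e, v⟫_ℂ]
  calc ‖a‖ * ‖⟪e, u⟫_ℂ‖ * (‖c‖ * ‖⟪e, v⟫_ℂ‖) * ‖⟪u, v⟫_ℂ‖
      = ‖a‖ * ‖c‖ * ‖⟪u, v⟫_ℂ‖ * (‖⟪e, u⟫_ℂ‖ * ‖⟪e, v⟫_ℂ‖) := by ring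
    _ ≤ ‖a‖ * ‖c‖ * M * (‖⟪e, u⟫_ℂ‖ ^ 2 + ‖⟪e, v⟫_ℂ‖ ^ 2) := by
      gcongr
      exact mul_nonneg (by positivity) ((norm_nonneg _).trans hM)

theorem HilbertBasis.hasSum_kernelQuadForm_inner_coeff [Countable ι] [IsFiniteMeasure μ]
    (b : HilbertBasis ι ℂ E) (hΦ : StronglyMeasurable Φ) {C : ℝ} (hC : ∀ x, ‖Φ x‖ ≤ C)
    (hf : Integrable f μ) :
    HasSum (fun i => kernelQuadForm μ (fun x y => ⟪Φ x, Φ y⟫_ℂ) (fun x => f x * ⟪Φ x, b i⟫_ℂ))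
      (kernelQuadForm μ (fun x y => (‖⟪Φ x, Φ y⟫_ℂ‖ : ℂ) ^ 2) f) := by
  have hk : StronglyMeasurable fun p : X × X => ⟪Φ p.1, Φ p.2⟫_ℂ :=
    (hΦ.comp_measurable measurable_fst).inner (hΦ.comp_measurable measurable_snd)
  have hkC : ∀ x y, ‖⟪Φ x, Φ y⟫_ℂ‖ ≤ C * C := fun x y =>
    (norm_inner_le_norm _ _).trans (mul_le_mul (hC x) (hC y) (norm_nonneg _)
      ((norm_nonneg _).trans (hC x)))
  have hcoeff : ∀ i, Integrable (fun x => f x * ⟪Φ x, b i⟫_ℂ) μ := fun i =>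
    hf.mul_inner_const hΦ hC (b i)
  have hkSq : StronglyMeasurable fun p : X × X => (‖⟪Φ p.1, Φ p.2⟫_ℂ‖ : ℂ) ^ 2 :=
    (Complex.continuous_ofReal.comp_stronglyMeasurable hk.norm).pow 2
  have hkSqC : ∀ x y, ‖(‖⟪Φ x, Φ y⟫_ℂ‖ : ℂ) ^ 2‖ ≤ (C * C) ^ 2 := fun x y => by
    rw [norm_pow, Complex.norm_real, norm_norm]
    exact pow_le_pow_left₀ (norm_nonneg _) (hkC x y) 2
  have hint : ∀ i, Integrable (fun p : X × X => conj (f p.1 * ⟪Φ p.1, b i⟫_ℂ) *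
      (f p.2 * ⟪Φ p.2, b i⟫_ℂ) * ⟪Φ p.1, Φ p.2⟫_ℂ) (μ.prod μ) := fun i =>
    integrable_kernelQuadForm_integrand (f := fun x => f x * ⟪Φ x, b i⟫_ℂ)
      (k := fun x y => ⟪Φ x, Φ y⟫_ℂ) (hcoeff i) hk.aestronglyMeasurable hkC
  have hSq := integrable_kernelQuadForm_integrand (k := fun x y => (‖⟪Φ x, Φ y⟫_ℂ‖ : ℂ) ^ 2) hf
    hkSq.aestronglyMeasurable hkSqC
  rw [kernelQuadForm_eq_integral_prod (f := f) hSq]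
  simp only [fun i => kernelQuadForm_eq_integral_prod (f := fun x => f x * ⟪Φ x, b i⟫_ℂ)
    (k := fun x y => ⟪Φ x, Φ y⟫_ℂ) (hint i)]
  set bound := fun i (p : X × X) =>
    ‖f p.1‖ * ‖f p.2‖ * (C * C) * (‖⟪b i, Φ p.1⟫_ℂ‖ ^ 2 + ‖⟪b i, Φ p.2⟫_ℂ‖ ^ 2)
  have hbound : ∀ p, HasSum (fun i => bound i p)
      (‖f p.1‖ * ‖f p.2‖ * (C * C) * (‖Φ p.1‖ ^ 2 + ‖Φ p.2‖ ^ 2)) := fun p =>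
    ((b.hasSum_norm_inner_sq _).add (b.hasSum_norm_inner_sq _)).mul_left _
  refine hasSum_integral_of_dominated_convergence bound (fun i => (hint i).aestronglyMeasurable)
    (fun i => ae_of_all _ fun p => norm_conj_mul_inner_mul_inner_le _ _ _ _ _ (hkC p.1 p.2))
    (ae_of_all _ fun p => (hbound p).summable) ?_
    (ae_of_all _ fun p => b.hasSum_conj_mul_inner_mul_inner _ _ _ _)
  simpa only [fun p => (hbound p).tsum_eq] using
    integrable_prod_norm_mul_norm_mul_sq_add_sq hf hΦ hC (C * C)

end InnerKernel

theorem IsIntSPD.normSq_inner {X E : Type*} [MeasurableSpace X] [NormedAddCommGroup E]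
    [InnerProductSpace ℂ E] [CompleteSpace E] [TopologicalSpace.SeparableSpace E] {Φ : X → E}
    (hΦ : StronglyMeasurable Φ) {C : ℝ} (hC : ∀ x, ‖Φ x‖ ≤ C)
    (h : IsIntSPD fun x y => ⟪Φ x, Φ y⟫_ℂ) :
    IsIntSPD fun x y => (‖⟪Φ x, Φ y⟫_ℂ‖ : ℂ) ^ 2 := by
  obtain ⟨w, b, -⟩ := exists_hilbertBasis ℂ E
  have : Countable w := b.orthonormal.countable
  have hpos := isIntSPD_iff_pos.mp h
  refine isIntSPD_iff_pos.mpr fun μ hμ f hf hf0 => ?_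
  have hsum := b.hasSum_kernelQuadForm_inner_coeff hΦ hC hf
  obtain ⟨i, hi⟩ : ∃ i, ¬ (fun x => f x * ⟪Φ x, b i⟫_ℂ) =ᵐ[μ] 0 := by
    by_contra! hall
    exact (hpos μ hμ f hf hf0).ne'
      (kernelQuadForm_inner_eq_zero_of_ae_smul_eq_zero
        (b.ae_smul_eq_zero_of_coeff_ae_eq_zero hall))
  rw [← hsum.tsum_eq]
  exact hsum.summable.tsum_pos (fun j => h.kernelQuadForm_nonneg (hf.mul_inner_const hΦ hC _)) i
    (hpos μ hμ _ (hf.mul_inner_const hΦ hC _) hi)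

/-- If `k(x,y) = ⟨φ(x), φ(y)⟩` is integrally strictly positive definite for a bounded
measurable feature map `φ` into a separable complex Hilbert space, then the
norm-squared kernel `|k(x,y)|²` is also integrally strictly positive definite. -/
theorem normSq_kernel_isIntSPD
    {X : Type*} [MeasurableSpace X]
    {H : Type*} [NormedAddCommGroup H] [InnerProductSpace ℂ H]
    [TopologicalSpace.SeparableSpace H] [MeasurableSpace H] [BorelSpace H]
    (φ : X → H) (hφ : Measurable φ) (hb : ∃ C, ∀ x, ‖φ x‖ ≤ C)
    (h : IsIntSPD (fun x y => ⟪φ x, φ y⟫_ℂ)) :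
    IsIntSPD (fun x y => ((‖⟪φ x, φ y⟫_ℂ‖ : ℂ) ^ 2)) := by
  obtain ⟨C, hC⟩ := hb
  have : SecondCountableTopology H := UniformSpace.secondCountable_of_separable H
  have hφ' : StronglyMeasurable fun x => (φ x : UniformSpace.Completion H) :=
    (UniformSpace.Completion.continuous_coe H).comp_stronglyMeasurable hφ.stronglyMeasurable
  simpa only [UniformSpace.Completion.inner_coe] using IsIntSPD.normSq_inner hφ'
    (by simpa using hC) (by simpa only [UniformSpace.Completion.inner_coe] using h)
end

section
/- Let T: P(X) → E be a continuous affine map from the space of Borel probability measures on a metrizable space X (with the topology of weak convergence) to a normed space E. Then the set {T(δ_x) : x ∈ X} is bounded in E. -/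
/-!
If `‖T μₙ‖ > n + 1` along some sequence, the mixtures `(n+1)⁻¹ μₙ + (1 - (n+1)⁻¹) ν` converge
weakly to `ν`, since the first summand contributes at most `(n+1)⁻¹ ‖f‖` to `∫ f`. By continuity
and affinity, `(n+1)⁻¹ • T μₙ = T (mixture) - (1 - (n+1)⁻¹) • T ν → 0`, contradicting
`‖(n+1)⁻¹ • T μₙ‖ > 1`. So `T` is bounded on all of `P(X)`, in particular on the Dirac measures.
-/

open MeasureTheory Filter Topology unitInterval

namespace MeasureTheory.ProbabilityMeasure

variable {Ω : Type*} [MeasurableSpace Ω]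

noncomputable def mix (t : I) (μ ν : ProbabilityMeasure Ω) : ProbabilityMeasure Ω :=
  ⟨ENNReal.ofReal t • (μ : Measure Ω) + ENNReal.ofReal (1 - t) • (ν : Measure Ω),
    ⟨by simp [← ENNReal.ofReal_add t.2.1 (one_minus_nonneg t)]⟩⟩

theorem toMeasure_mix (t : I) (μ ν : ProbabilityMeasure Ω) :
    (mix t μ ν : Measure Ω) =
      ENNReal.ofReal t • (μ : Measure Ω) + ENNReal.ofReal (1 - t) • (ν : Measure Ω) :=
  rfl

theorem integral_mix {E : Type*} [NormedAddCommGroup E] [NormedSpace ℝ E] {f : Ω → E}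
    (t : I) {μ ν : ProbabilityMeasure Ω} (hμ : Integrable f μ) (hν : Integrable f ν) :
    ∫ ω, f ω ∂(mix t μ ν : Measure Ω) =
      (t : ℝ) • ∫ ω, f ω ∂(μ : Measure Ω) + (1 - (t : ℝ)) • ∫ ω, f ω ∂(ν : Measure Ω) := by
  rw [toMeasure_mix, integral_add_measure (hμ.smul_measure ENNReal.ofReal_ne_top)
    (hν.smul_measure ENNReal.ofReal_ne_top), integral_smul_measure, integral_smul_measure,
    ENNReal.toReal_ofReal t.2.1, ENNReal.toReal_ofReal (one_minus_nonneg t)]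

variable [TopologicalSpace Ω] [OpensMeasurableSpace Ω]

theorem tendsto_mix_of_tendsto_zero {ι : Type*} {l : Filter ι} {t : ι → I}
    (ht : Tendsto t l (𝓝 0)) (μ : ι → ProbabilityMeasure Ω) (ν : ProbabilityMeasure Ω) :
    Tendsto (fun i ↦ mix (t i) (μ i) ν) l (𝓝 ν) := by
  rw [tendsto_iff_forall_integral_tendsto]
  intro f
  have ht' : Tendsto (fun i ↦ (t i : ℝ)) l (𝓝 0) := tendsto_subtype_rng.1 ht
  have hμ_bdd : IsBoundedUnder (· ≤ ·) l (fun i ↦ ‖∫ ω, f ω ∂(μ i : Measure Ω)‖) :=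
    isBoundedUnder_of ⟨‖f‖, fun i ↦ f.norm_integral_le_norm _⟩
  simp only [integral_mix _ (f.integrable _) (f.integrable _), smul_eq_mul]
  simpa using (ht'.zero_mul_isBoundedUnder_le hμ_bdd).add
    (((tendsto_const_nhds (x := (1 : ℝ))).sub ht').mul_const (∫ ω, f ω ∂(ν : Measure Ω)))

variable {E : Type*} [NormedAddCommGroup E] [NormedSpace ℝ E]

theorem tendsto_smul_zero_of_map_mix {T : ProbabilityMeasure Ω → E} (hT_cont : Continuous T)
    (hT_mix : ∀ t μ ν, T (mix t μ ν) = (t : ℝ) • T μ + (1 - (t : ℝ)) • T ν)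
    {ι : Type*} {l : Filter ι} {t : ι → I} (ht : Tendsto t l (𝓝 0))
    (μ : ι → ProbabilityMeasure Ω) (ν : ProbabilityMeasure Ω) :
    Tendsto (fun i ↦ (t i : ℝ) • T (μ i)) l (𝓝 0) := by
  have ht' : Tendsto (fun i ↦ (t i : ℝ)) l (𝓝 0) := tendsto_subtype_rng.1 ht
  have h_mix : Tendsto (fun i ↦ T (mix (t i) (μ i) ν)) l (𝓝 (T ν)) :=
    (hT_cont.tendsto ν).comp (tendsto_mix_of_tendsto_zero ht μ ν)
  have h_rest : Tendsto (fun i ↦ (1 - (t i : ℝ)) • T ν) l (𝓝 (T ν)) := by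
    simpa using ((tendsto_const_nhds (x := (1 : ℝ))).sub ht').smul_const (T ν)
  simpa [hT_mix] using h_mix.sub h_rest

theorem isBounded_range_of_map_mix {T : ProbabilityMeasure Ω → E} (hT_cont : Continuous T)
    (hT_mix : ∀ t μ ν, T (mix t μ ν) = (t : ℝ) • T μ + (1 - (t : ℝ)) • T ν) :
    Bornology.IsBounded (Set.range T) := by
  by_contra h_unbdd
  simp only [isBounded_iff_forall_norm_le, Set.forall_mem_range, not_exists, not_forall,
    not_le] at h_unbdd
  choose μ hμ using fun n : ℕ ↦ h_unbdd (n + 1)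
  let t (n : ℕ) : I := ⟨1 / (n + 1), by positivity, div_le_one_of_le₀ (by simp) (by positivity)⟩
  have ht : Tendsto t atTop (𝓝 0) :=
    tendsto_subtype_rng.2 tendsto_one_div_add_atTop_nhds_zero_nat
  have h_small : ∀ᶠ n in atTop, ‖(t n : ℝ) • T (μ n)‖ < 1 :=
    (tendsto_smul_zero_of_map_mix hT_cont hT_mix ht μ (μ 0)).norm.eventually_lt_const (by simp)
  obtain ⟨n, hn⟩ := h_small.exists
  have h_large : 1 < ‖(t n : ℝ) • T (μ n)‖ := by
    rw [norm_smul, Real.norm_of_nonneg (t n).2.1]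
    change 1 < 1 / ((n : ℝ) + 1) * _
    rw [one_div, ← div_eq_inv_mul, one_lt_div (by positivity)]
    exact hμ n
  exact lt_asymm hn h_large

end MeasureTheory.ProbabilityMeasure

theorem bounded_image_of_diracs_general
    {X : Type*} [TopologicalSpace X]
    [MeasurableSpace X] [OpensMeasurableSpace X]
    {E : Type*} [NormedAddCommGroup E] [NormedSpace ℝ E]
    (T : ProbabilityMeasure X → E)
    (hT_cont : Continuous T)
    (hT_affine : ∀ (μ ν κ : ProbabilityMeasure X) (t : ℝ), 0 ≤ t → t ≤ 1 →
      (κ : Measure X) = ENNReal.ofReal t • (μ : Measure X)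
          + ENNReal.ofReal (1 - t) • (ν : Measure X) →
      T κ = t • T μ + (1 - t) • T ν) :
    Bornology.IsBounded
      (Set.range fun x : X => T ⟨Measure.dirac x, inferInstance⟩) :=
  (ProbabilityMeasure.isBounded_range_of_map_mix hT_cont
    (fun t μ ν ↦ hT_affine μ ν _ t t.2.1 t.2.2 rfl)).subset (Set.range_comp_subset_range _ T)

/-- If `T` is a continuous affine map from the space of Borel probability measures on a
metrizable space `X` (weak topology) into a normed space `E`, then the images of the
Dirac measures form a bounded subset of `E`. -/
theorem bounded_image_of_diracs
    {X : Type*} [TopologicalSpace X] [TopologicalSpace.MetrizableSpace X]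
    [MeasurableSpace X] [OpensMeasurableSpace X]
    {E : Type*} [NormedAddCommGroup E] [NormedSpace ℝ E]
    (T : ProbabilityMeasure X → E)
    (hT_cont : Continuous T)
    (hT_affine : ∀ (μ ν κ : ProbabilityMeasure X) (t : ℝ), 0 ≤ t → t ≤ 1 →
      (κ : Measure X) = ENNReal.ofReal t • (μ : Measure X)
          + ENNReal.ofReal (1 - t) • (ν : Measure X) →
      T κ = t • T μ + (1 - t) • T ν) :
    Bornology.IsBounded
      (Set.range fun x : X => T ⟨Measure.dirac x, inferInstance⟩) :=
  bounded_image_of_diracs_general T hT_cont hT_affine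
end
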